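/- Fix 0 < q < 1, integers n ≥ 1 and a permutation π ∈ S_n. Let G_1, ..., G_n be i.i.d. geometric random variables with P(G_i = k) = q^k(1-q). Then the probability that G_{π(1)} ⊵_1 G_{π(2)} ⊵_2 ... ⊵_{n-1} G_{π(n)}, where ⊵_i denotes strict inequality > if i is a descent of π and weak inequality ≥ otherwise, equals q^{maj(π)} / [n]_q!. -/

import Mathlib

/-
Put `u i = G (π i)`. The event says that `u (i + 1) + s i ≤ u i`, where `s i ∈ {0, 1}` marks
the descents of `π`. Such sequences `u` correspond bijectively to arbitrary `d ∈ ℕⁿ` via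
`u i = ∑_{j ≥ i} (d j + s j)` (with `s (n - 1) = 0`), and then `∑ u = maj π + ∑_j (j + 1) d j`.
By independence the probability is `(1 - q)ⁿ ∑_u q^{∑ u}`, which factors into geometric series:
`q^{maj π} (1 - q)ⁿ ∏_{j=1}^n (1 - q^j)⁻¹ = q^{maj π} / [n]_q!`.
-/
open MeasureTheory ProbabilityTheory

/-- The major index of a word `w` of length `N`. -/
def wmaj {N : ℕ} {α : Type*} [LinearOrder α] (w : Fin N → α) : ℕ :=
  ∑ i ∈ Finset.range (N - 1),
    if h : i + 1 < N then
      (if w ⟨i + 1, h⟩ < w ⟨i, Nat.lt_of_succ_lt h⟩ then i + 1 else 0)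
    else 0

/-- The major index of a permutation. -/
def maj {n : ℕ} (π : Equiv.Perm (Fin n)) : ℕ := wmaj (fun i => π i)

/-- The `q`-integer `[m]_q = 1 + q + ⋯ + q^{m-1}`. -/
def qint (q : ℝ) (m : ℕ) : ℝ := ∑ j ∈ Finset.range m, q ^ j

/-- The `q`-factorial `[n]_q! = ∏_{i=1}^n [i]_q`. -/
def qfact (q : ℝ) (n : ℕ) : ℝ := ∏ i ∈ Finset.range n, qint q (i + 1)

/-- The conditionally descending chain: `G (π i) ⊵ᵢ G (π (i+1))`, strict if `i` is a
descent of `π` and weak otherwise. -/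
def DescChain {n : ℕ} (G : Fin n → ℕ) (π : Equiv.Perm (Fin n)) : Prop :=
  ∀ i : ℕ, ∀ h : i + 1 < n,
    if π ⟨i + 1, h⟩ < π ⟨i, Nat.lt_of_succ_lt h⟩ then
      G (π ⟨i + 1, h⟩) < G (π ⟨i, Nat.lt_of_succ_lt h⟩)
    else
      G (π ⟨i + 1, h⟩) ≤ G (π ⟨i, Nat.lt_of_succ_lt h⟩)

open Finset

lemma Fin.sum_sum_Ici {n : ℕ} (f : Fin n → ℕ) :
    ∑ i, ∑ j ∈ Ici i, f j = ∑ j, (j + 1) * f j := by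
  rw [sum_comm' (t' := univ) (s' := Iic) (by simp)]
  simp [Fin.card_Iic]

section ShiftedAntitone

variable {m : ℕ} (s : Fin m → ℕ)

def shiftedAntitone : Set (Fin (m + 1) → ℕ) :=
  {u | ∀ i : Fin m, u i.succ + s i ≤ u i.castSucc}

def ofGaps (d : Fin (m + 1) → ℕ) (i : Fin (m + 1)) : ℕ :=
  ∑ j ∈ Ici i, (d j + (Fin.snoc s 0 : Fin (m + 1) → ℕ) j)

def gaps (u : Fin (m + 1) → ℕ) : Fin (m + 1) → ℕ :=
  Fin.lastCases (u (Fin.last m)) fun i => u i.castSucc - u i.succ - s i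

variable {s}

@[simp] lemma gaps_last (u : Fin (m + 1) → ℕ) : gaps s u (Fin.last m) = u (Fin.last m) := by
  simp [gaps]

@[simp] lemma gaps_castSucc (u : Fin (m + 1) → ℕ) (i : Fin m) :
    gaps s u i.castSucc = u i.castSucc - u i.succ - s i := by
  simp [gaps]

@[simp] lemma ofGaps_last (d : Fin (m + 1) → ℕ) : ofGaps s d (Fin.last m) = d (Fin.last m) := by
  have : Ici (Fin.last m) = {Fin.last m} := by ext j; simp [Fin.last_le_iff]
  simp [ofGaps, this]

@[simp] lemma ofGaps_castSucc (d : Fin (m + 1) → ℕ) (i : Fin m) :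
    ofGaps s d i.castSucc = d i.castSucc + s i + ofGaps s d i.succ := by
  have : Ici i.castSucc = insert i.castSucc (Ici i.succ) := by
    ext j
    simp only [mem_Ici, mem_insert, Fin.le_def, Fin.val_castSucc, Fin.val_succ, Fin.ext_iff]
    omega
  rw [ofGaps, this, sum_insert (by simp [Fin.le_def]), Fin.snoc_castSucc, ofGaps]

lemma ofGaps_mem (d : Fin (m + 1) → ℕ) : ofGaps s d ∈ shiftedAntitone s := by
  intro i
  rw [ofGaps_castSucc]
  omega

lemma gaps_ofGaps (d : Fin (m + 1) → ℕ) : gaps s (ofGaps s d) = d := by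
  funext i
  induction i using Fin.lastCases with
  | last => simp
  | cast i => simp only [gaps_castSucc, ofGaps_castSucc]; omega

lemma ofGaps_gaps {u : Fin (m + 1) → ℕ} (hu : u ∈ shiftedAntitone s) :
    ofGaps s (gaps s u) = u := by
  funext i
  induction i using Fin.reverseInduction with
  | last => simp
  | cast i ih =>
    have := hu i
    simp only [ofGaps_castSucc, gaps_castSucc, ih]
    omega

variable (s) in
def gapsEquiv : (Fin (m + 1) → ℕ) ≃ shiftedAntitone s where
  toFun d := ⟨ofGaps s d, ofGaps_mem d⟩
  invFun u := gaps s u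
  left_inv := gaps_ofGaps
  right_inv u := Subtype.ext (ofGaps_gaps u.2)

lemma sum_ofGaps (d : Fin (m + 1) → ℕ) :
    ∑ i, ofGaps s d i = ∑ i : Fin m, (i + 1) * s i + ∑ j, (j + 1) * d j := by
  rw [show ∑ i, ofGaps s d i = _ from Fin.sum_sum_Ici _]
  simp only [mul_add, sum_add_distrib, Fin.sum_univ_castSucc (n := m), Fin.snoc_castSucc,
    Fin.snoc_last, mul_zero, add_zero, Fin.val_castSucc]
  ring

end ShiftedAntitone

open scoped ENNReal

lemma ENNReal.tsum_pi_prod {n : ℕ} (f : Fin n → ℕ → ℝ≥0∞) :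
    ∑' d : Fin n → ℕ, ∏ j, f j (d j) = ∏ j, ∑' k, f j k := by
  induction n with
  | zero => simp
  | succ n ih =>
    rw [← (Fin.consEquiv fun _ => ℕ).tsum_eq, ENNReal.tsum_prod', Fin.prod_univ_succ]
    simp only [Fin.consEquiv_apply, Fin.prod_univ_succ, Fin.cons_zero, Fin.cons_succ,
      ENNReal.tsum_mul_left, ih, ENNReal.tsum_mul_right]

lemma tsum_pow_sum_shiftedAntitone {m : ℕ} (s : Fin m → ℕ) (Q : ℝ≥0∞) :
    ∑' u : shiftedAntitone s, Q ^ ∑ i, (u : Fin (m + 1) → ℕ) i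
      = Q ^ (∑ i : Fin m, (i + 1) * s i) * ∏ j : Fin (m + 1), (1 - Q ^ (j + 1 : ℕ))⁻¹ := by
  have hterm (d : Fin (m + 1) → ℕ) : Q ^ ∑ i, ofGaps s d i
      = Q ^ (∑ i : Fin m, (i + 1) * s i) * ∏ j : Fin (m + 1), (Q ^ (j + 1 : ℕ)) ^ d j := by
    simp_rw [sum_ofGaps, ← pow_mul, prod_pow_eq_pow_sum, pow_add Q _ (∑ j, _)]
  rw [← (gapsEquiv s).tsum_eq]
  simp only [gapsEquiv, Equiv.coe_fn_mk, hterm, ENNReal.tsum_mul_left,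
    ENNReal.tsum_pi_prod fun j k => (Q ^ (j + 1 : ℕ)) ^ k, ENNReal.tsum_geometric]

section Descents

variable {m : ℕ} {α : Type*} [LinearOrder α]

def descentIndicator (w : Fin (m + 1) → α) (i : Fin m) : ℕ :=
  if w i.succ < w i.castSucc then 1 else 0

lemma wmaj_eq_sum_descentIndicator (w : Fin (m + 1) → α) :
    wmaj w = ∑ i : Fin m, (i + 1) * descentIndicator w i := by
  rw [wmaj, Nat.add_sub_cancel, ← Fin.sum_univ_eq_sum_range]
  refine sum_congr rfl fun i _ => ?_
  rw [dif_pos (Nat.succ_lt_succ i.isLt)]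
  change (if w i.succ < w i.castSucc then _ else _) = _
  simp [descentIndicator]

lemma descChain_iff_mem_shiftedAntitone (v : Fin (m + 1) → ℕ) (π : Equiv.Perm (Fin (m + 1))) :
    DescChain v π ↔ v ∘ π ∈ shiftedAntitone (descentIndicator fun i => π i) := by
  have : DescChain v π ↔ ∀ i : Fin m, if π i.succ < π i.castSucc
      then v (π i.succ) < v (π i.castSucc) else v (π i.succ) ≤ v (π i.castSucc) :=
    ⟨fun h i => h i (Nat.succ_lt_succ i.isLt), fun h i hi => h ⟨i, Nat.lt_of_succ_lt_succ hi⟩⟩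
  rw [this]
  refine forall_congr' fun i => ?_
  simp only [descentIndicator, Function.comp_apply]
  split_ifs <;> omega

end Descents

lemma qfact_mul_one_sub_pow (q : ℝ) (n : ℕ) :
    qfact q n * (1 - q) ^ n = ∏ j ∈ range n, (1 - q ^ (j + 1)) := by
  rw [qfact, ← card_range n, ← prod_const, card_range, ← prod_mul_distrib]
  exact prod_congr rfl fun j _ => geom_sum_mul_neg q (j + 1)

lemma toReal_prod_inv_one_sub_pow_mul {q : ℝ} (hq0 : 0 ≤ q) (hq1 : q < 1) (n : ℕ) :
    ((∏ j : Fin n, (1 - ENNReal.ofReal q ^ (j + 1 : ℕ))⁻¹) * ENNReal.ofReal (1 - q) ^ n).toReal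
      = (qfact q n)⁻¹ := by
  have hfactor (j : ℕ) : (1 - ENNReal.ofReal q ^ (j + 1))⁻¹.toReal = (1 - q ^ (j + 1))⁻¹ := by
    rw [ENNReal.toReal_inv, ← ENNReal.ofReal_pow hq0, ← ENNReal.ofReal_one,
      ← ENNReal.ofReal_sub _ (pow_nonneg hq0 _),
      ENNReal.toReal_ofReal (sub_nonneg.2 (pow_le_one₀ hq0 hq1.le))]
  have hne : (1 - q) ^ n ≠ 0 := pow_ne_zero _ (sub_ne_zero.2 hq1.ne')
  rw [ENNReal.toReal_mul, ENNReal.toReal_prod, ENNReal.toReal_pow,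
    ENNReal.toReal_ofReal (sub_nonneg.2 hq1.le)]
  simp only [hfactor]
  rw [Fin.prod_univ_eq_prod_range (fun j => (1 - q ^ (j + 1))⁻¹), prod_inv_distrib,
    ← qfact_mul_one_sub_pow, mul_inv, inv_mul_cancel_right₀ hne]

lemma measure_preimage_eq_tsum_prod {Ω ι β : Type*} [MeasurableSpace Ω] {μ : Measure Ω}
    [Fintype ι] [Countable β] [MeasurableSpace β] [MeasurableSingletonClass β]
    {X : ι → Ω → β} (hX : ∀ i, Measurable (X i)) (hindep : iIndepFun X μ) (S : Set (ι → β)) :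
    μ ((fun ω i => X i ω) ⁻¹' S) = ∑' v : S, ∏ i, μ (X i ⁻¹' {(v : ι → β) i}) := by
  rw [← tsum_measure_preimage_singleton S.to_countable
    fun v _ => measurable_pi_lambda _ hX (measurableSet_singleton v)]
  refine tsum_congr fun v => ?_
  rw [show (fun ω i => X i ω) ⁻¹' {(v : ι → β)} = ⋂ i, X i ⁻¹' {(v : ι → β) i} by
    ext; simp [funext_iff]]
  exact hindep.meas_iInter fun i => ⟨{(v : ι → β) i}, measurableSet_singleton _, rfl⟩

lemma prod_measure_preimage_singleton_of_geometric {Ω ι : Type*} [MeasurableSpace Ω]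
    {μ : Measure Ω} [IsFiniteMeasure μ] [Fintype ι] {q : ℝ} (hq : 0 ≤ q) {X : ι → Ω → ℕ}
    (hX : ∀ i k, (μ {ω | X i ω = k}).toReal = q ^ k * (1 - q)) (u : ι → ℕ) :
    ∏ i, μ (X i ⁻¹' {u i})
      = ENNReal.ofReal q ^ (∑ i, u i) * ENNReal.ofReal (1 - q) ^ Fintype.card ι := by
  have hatom (i : ι) (k : ℕ) :
      μ (X i ⁻¹' {k}) = ENNReal.ofReal q ^ k * ENNReal.ofReal (1 - q) := by
    rw [← ENNReal.ofReal_toReal (measure_ne_top μ _), ← ENNReal.ofReal_pow hq,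
      ← ENNReal.ofReal_mul (pow_nonneg hq k)]
    exact congrArg ENNReal.ofReal (hX i k)
  simp only [hatom, prod_mul_distrib, prod_pow_eq_pow_sum, prod_const, card_univ]

theorem desc_chain_prob_general {Ω : Type*} [MeasurableSpace Ω] (μ : Measure Ω)
    [IsProbabilityMeasure μ] (q : ℝ) (hq0 : 0 < q) (hq1 : q < 1)
    (n : ℕ) (G : Fin n → Ω → ℕ) (hmeas : ∀ i, Measurable (G i))
    (hindep : iIndepFun G μ)
    (hgeom : ∀ i, ∀ k : ℕ, (μ {ω | G i ω = k}).toReal = q ^ k * (1 - q))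
    (π : Equiv.Perm (Fin n)) :
    (μ {ω | DescChain (fun i => G i ω) π}).toReal = q ^ maj π / qfact q n := by
  cases n with
  | zero => simp [DescChain, maj, wmaj, qfact]
  | succ m =>
    have hevent : {ω | DescChain (fun i => G i ω) π}
        = (fun ω i => G (π i) ω) ⁻¹' shiftedAntitone (descentIndicator fun i => π i) := by
      ext ω
      exact descChain_iff_mem_shiftedAntitone (fun i => G i ω) π
    rw [hevent,
      measure_preimage_eq_tsum_prod (fun i => hmeas (π i)) (hindep.precomp π.injective)]
    simp only [prod_measure_preimage_singleton_of_geometric hq0.le fun i => hgeom (π i),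
      ENNReal.tsum_mul_right, tsum_pow_sum_shiftedAntitone, Fintype.card_fin]
    rw [maj, wmaj_eq_sum_descentIndicator, mul_assoc, ENNReal.toReal_mul, ENNReal.toReal_pow,
      ENNReal.toReal_ofReal hq0.le, toReal_prod_inv_one_sub_pow_mul hq0.le hq1, div_eq_mul_inv]

/-- For i.i.d. geometric `G₁, …, Gₙ` with parameter `1 - q`, the probability that
`G (π 1) ⊵₁ G (π 2) ⊵₂ ⋯ ⊵_{n-1} G (π n)` — strict at descents of `π`, weak
otherwise — equals `q^{maj π} / [n]_q!`. -/
theorem desc_chain_prob {Ω : Type*} [MeasurableSpace Ω] (μ : Measure Ω)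
    [IsProbabilityMeasure μ] (q : ℝ) (hq0 : 0 < q) (hq1 : q < 1)
    (n : ℕ) (hn : 1 ≤ n) (G : Fin n → Ω → ℕ) (hmeas : ∀ i, Measurable (G i))
    (hindep : iIndepFun G μ)
    (hgeom : ∀ i, ∀ k : ℕ, (μ {ω | G i ω = k}).toReal = q ^ k * (1 - q))
    (π : Equiv.Perm (Fin n)) :
    (μ {ω | DescChain (fun i => G i ω) π}).toReal = q ^ maj π / qfact q n :=
  desc_chain_prob_general μ q hq0 hq1 n G hmeas hindep hgeom π
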